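/- arXiv:2303.04441 — 3 statements merged into one kernel-verified Lean document; each statement's English description precedes it below -/
import Mathlib

section
/- Assume β̄ > α > 0, c > 0, u ≠ 0, and that the discriminant D = (β̄c − u)² + 4uc(β̄ − α) satisfies D ≥ 0. Then √D > |u − β̄c| if u > 0, and √D < |u − β̄c| if u < 0; consequently i* = ((u − β̄c) + √D)/(2uc) is strictly positive in both cases. -/
/-!
Write `b = u - β̄c`, so that `D = b² + t` with `t = 4uc(β̄ - α)` of the sign of `u`; hence `√D`
exceeds `|b|` exactly when `u > 0`. For `u > 0` the numerator `b + √D ≥ √D - |b|` of `i*` is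
positive, and so is its denominator. For `u < 0` also `b < 0` (as `β̄c > 0`), so the numerator is
below `b + |b| = 0`, as is the denominator.
-/

namespace Real

variable {b t : ℝ}

theorem abs_lt_sqrt_sq_add (ht : 0 < t) : |b| < √(b ^ 2 + t) :=
  (lt_sqrt (abs_nonneg b)).2 (by rw [sq_abs]; linarith)

theorem sqrt_sq_add_lt_abs (hb : b ≠ 0) (ht : t < 0) : √(b ^ 2 + t) < |b| :=
  (sqrt_lt' (abs_pos.2 hb)).2 (by rw [sq_abs]; linarith)

theorem add_sqrt_sq_add_pos (ht : 0 < t) : 0 < b + √(b ^ 2 + t) := by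
  linarith [abs_lt_sqrt_sq_add (b := b) ht, neg_abs_le b]

theorem add_sqrt_sq_add_neg (hb : b < 0) (ht : t < 0) : b + √(b ^ 2 + t) < 0 := by
  linarith [sqrt_sq_add_lt_abs hb.ne ht, abs_of_neg hb]

end Real

theorem ibin_root_positive_general (β α u c : ℝ)
    (hα : 0 < α) (hβα : α < β) (hc : 0 < c) (hu : u ≠ 0) :
    (0 < u → |u - β * c| < Real.sqrt ((β * c - u) ^ 2 + 4 * u * c * (β - α))) ∧
    (u < 0 → Real.sqrt ((β * c - u) ^ 2 + 4 * u * c * (β - α)) < |u - β * c|) ∧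
    0 < ((u - β * c) + Real.sqrt ((β * c - u) ^ 2 + 4 * u * c * (β - α)))
          / (2 * u * c) := by
  rw [show (β * c - u) ^ 2 = (u - β * c) ^ 2 by ring]
  have hβα' : 0 < β - α := sub_pos.2 hβα
  have ht_pos (h : 0 < u) : 0 < 4 * u * c * (β - α) := by positivity
  have ht_neg (h : u < 0) : 4 * u * c * (β - α) < 0 :=
    mul_neg_of_neg_of_pos (mul_neg_of_neg_of_pos (mul_neg_of_pos_of_neg four_pos h) hc) hβα'
  have hb_neg (h : u < 0) : u - β * c < 0 := by
    linarith [mul_pos (hα.trans hβα) hc]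
  refine ⟨fun h ↦ Real.abs_lt_sqrt_sq_add (ht_pos h),
    fun h ↦ Real.sqrt_sq_add_lt_abs (hb_neg h).ne (ht_neg h), ?_⟩
  rcases hu.lt_or_gt with h | h
  · exact div_pos_of_neg_of_neg (Real.add_sqrt_sq_add_neg (hb_neg h) (ht_neg h))
      (mul_neg_of_neg_of_pos (mul_neg_of_pos_of_neg two_pos h) hc)
  · exact div_pos (Real.add_sqrt_sq_add_pos (ht_pos h)) (by positivity)

/-- With `D = (β̄c − u)² + 4uc(β̄ − α) ≥ 0`: `√D > |u − β̄c|` if `u > 0`,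
`√D < |u − β̄c|` if `u < 0`; hence `i* > 0` in both cases. -/
theorem ibin_root_positive (β α u c : ℝ)
    (hα : 0 < α) (hβα : α < β) (hc : 0 < c) (hu : u ≠ 0)
    (hD : 0 ≤ (β * c - u) ^ 2 + 4 * u * c * (β - α)) :
    (0 < u → |u - β * c| < Real.sqrt ((β * c - u) ^ 2 + 4 * u * c * (β - α))) ∧
    (u < 0 → Real.sqrt ((β * c - u) ^ 2 + 4 * u * c * (β - α)) < |u - β * c|) ∧
    0 < ((u - β * c) + Real.sqrt ((β * c - u) ^ 2 + 4 * u * c * (β - α)))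
          / (2 * u * c) :=
  ibin_root_positive_general β α u c hα hβα hc hu
end

section
/- Let K = β̄ + u i* > 0, c > 0, l_i > 0, α > 0, p_r > 0, and suppose (u + β̄c)² > 4αuc. If i* = ((u − β̄c) + √((u+β̄c)² − 4αuc))/(2uc) (u ≠ 0), then c K² − uα > 0; equivalently the determinant of the Jacobian J(i*,r*) of the IBIN system at the interior equilibrium, which equals (i* l_i/K)(cK² − uα), is strictly positive. -/
/-!
At the equilibrium, `K = β̄ + u i*` is the larger root `((u + β̄c) + √Δ) / (2c)` of
`c K² − (u + β̄c) K + uα = 0`, where `Δ = (u + β̄c)² − 4αuc`. Since the product of the two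
roots is `uα / c`, this gives `c K² − uα = √Δ · K`, which is positive because `Δ > 0` and `K > 0`.
-/

theorem mul_sq_sub_eq_mul_of_eq_quadratic_root {b c d s x : ℝ} (hc : c ≠ 0)
    (hs : s ^ 2 = b ^ 2 - 4 * c * d) (hx : x = (b + s) / (2 * c)) :
    c * x ^ 2 - d = s * x := by
  subst hx
  field_simp
  linear_combination -hs

theorem ibin_K_eq_root {β u c K istar s : ℝ} (hu : u ≠ 0) (hc : c ≠ 0)
    (histar : istar = ((u - β * c) + s) / (2 * u * c)) (hK : K = β + u * istar) :
    K = (u + β * c + s) / (2 * c) := by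
  rw [hK, histar]
  field_simp
  ring

theorem ibin_jacobian_det_pos_general (β α u c li K istar : ℝ)
    (hc : 0 < c) (hli : 0 < li)
    (hu : u ≠ 0)
    (hdisc : 4 * α * u * c < (u + β * c) ^ 2)
    (histar : istar = ((u - β * c) + Real.sqrt ((u + β * c) ^ 2 - 4 * α * u * c))
        / (2 * u * c))
    (hipos : 0 < istar)
    (hK : K = β + u * istar) (hKpos : 0 < K) :
    0 < c * K ^ 2 - u * α ∧
    0 < (istar * li / K) * (c * K ^ 2 - u * α) := by
  set s := Real.sqrt ((u + β * c) ^ 2 - 4 * α * u * c)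
  have hs_pos : 0 < s := Real.sqrt_pos.mpr (sub_pos.mpr hdisc)
  have hs_sq : s ^ 2 = (u + β * c) ^ 2 - 4 * c * (u * α) := by
    rw [Real.sq_sqrt (sub_pos.mpr hdisc).le]
    ring
  have hdet : c * K ^ 2 - u * α = s * K :=
    mul_sq_sub_eq_mul_of_eq_quadratic_root hc.ne' hs_sq (ibin_K_eq_root hu hc.ne' histar hK)
  have hpos : 0 < c * K ^ 2 - u * α := hdet ▸ mul_pos hs_pos hKpos
  exact ⟨hpos, by positivity⟩

/-- For `K = β̄ + u i* > 0` at the interior equilibrium,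
`cK² − uα > 0`; equivalently the determinant `(i* l_i/K)(cK² − uα)` of the
IBIN Jacobian is strictly positive. -/
theorem ibin_jacobian_det_pos (β α u c li pr K istar : ℝ)
    (hc : 0 < c) (hli : 0 < li) (hα : 0 < α) (hpr : 0 < pr)
    (hu : u ≠ 0)
    (hdisc : 4 * α * u * c < (u + β * c) ^ 2)
    (histar : istar = ((u - β * c) + Real.sqrt ((u + β * c) ^ 2 - 4 * α * u * c))
        / (2 * u * c))
    (hipos : 0 < istar)
    (hK : K = β + u * istar) (hKpos : 0 < K) :
    0 < c * K ^ 2 - u * α ∧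
    0 < (istar * li / K) * (c * K ^ 2 - u * α) :=
  ibin_jacobian_det_pos_general β α u c li K istar hc hli hu hdisc histar hipos hK hKpos
end

section
/- Let a, b, l_i, α, p_r > 0 with bαp_r − al_i > 0 (product-of-eigenvalues condition) and suppose u(1 − c i*) > b + l_i/i* where a = u(1−i*−r*) − b, b = β̄ + ui*, c = 1 + αp_r/l_i. Then the trace a i* − l_i of the Jacobian J(i*,r*) = [[i*a, −i*b],[αp_r, −l_i]] is strictly positive, so (i*, r*) is a source (both eigenvalues have positive real part given the positive determinant). -/
open Matrix

/-!
Since `a + b = u (1 − c i*)`, the source condition says exactly `l_i / i* < a`, i.e. the trace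
`i* a − l_i` is positive, while `det J = i* (b α p_r − a l_i) > 0`. The eigenvalues are the roots
of `μ² − (tr J) μ + det J`: a non-real root has real part `tr J / 2`, and a real root is positive
because the polynomial is positive on `(-∞, 0]`.
-/

theorem Complex.re_pos_of_sq_sub_mul_add_eq_zero {T D : ℝ} (hT : 0 < T) (hD : 0 < D) {μ : ℂ}
    (hμ : μ ^ 2 - T * μ + D = 0) : 0 < μ.re := by
  have hre : μ.re ^ 2 - μ.im ^ 2 - T * μ.re + D = 0 := by
    simpa [sq] using congrArg Complex.re hμ
  have him : μ.re * μ.im + μ.im * μ.re - T * μ.im = 0 := by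
    simpa [sq] using congrArg Complex.im hμ
  rcases mul_eq_zero.mp (by linear_combination him : μ.im * (2 * μ.re - T) = 0) with
    hreal | hhalf
  · rw [hreal] at hre
    nlinarith
  · linarith

theorem Matrix.re_pos_of_mem_spectrum_map_ofReal (M : Matrix (Fin 2) (Fin 2) ℝ)
    (htr : 0 < M.trace) (hdet : 0 < M.det) :
    ∀ μ ∈ spectrum ℂ (M.map Complex.ofReal), 0 < μ.re := by
  intro μ hμ
  have htr' : (M.map Complex.ofReal).trace = (M.trace : ℂ) :=
    (AddMonoidHom.map_trace Complex.ofRealHom M).symm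
  have hdet' : (M.map Complex.ofReal).det = (M.det : ℂ) :=
    (RingHom.map_det Complex.ofRealHom M).symm
  rw [mem_spectrum_iff_isRoot_charpoly, charpoly_fin_two, htr', hdet'] at hμ
  refine Complex.re_pos_of_sq_sub_mul_add_eq_zero htr hdet ?_
  simpa using hμ

theorem ibin_trace_pos {u li istar rstar a b c k : ℝ} (hipos : 0 < istar)
    (hr : rstar = k * istar) (hc : c = 1 + k) (ha : a = u * (1 - istar - rstar) - b)
    (hsrc : b + li / istar < u * (1 - c * istar)) :
    0 < istar * a - li := by
  have hsum : u * (1 - c * istar) = a + b := by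
    rw [hc, ha, hr]; ring
  have : li < a * istar := (div_lt_iff₀ hipos).mp (by linarith)
  linarith

theorem ibin_source_general (α u pr li istar rstar a b c : ℝ)
    (hipos : 0 < istar)
    (hr : rstar = (α * pr / li) * istar)
    (hc : c = 1 + α * pr / li)
    (ha : a = u * (1 - istar - rstar) - b)
    (hdet : 0 < b * α * pr - a * li)
    (hsrc : b + li / istar < u * (1 - c * istar))
    (J : Matrix (Fin 2) (Fin 2) ℝ)
    (hJ : J = !![istar * a, -istar * b; α * pr, -li]) :
    0 < istar * a - li ∧ 0 < Matrix.trace J ∧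
    ∀ μ ∈ spectrum ℂ (J.map (Complex.ofReal)), 0 < μ.re := by
  have htr : 0 < istar * a - li := ibin_trace_pos hipos hr hc ha hsrc
  have hJtr : 0 < J.trace := by
    rw [hJ, trace_fin_two_of]; linarith
  have hJdet : 0 < J.det := by
    rw [hJ, det_fin_two_of]
    linarith [mul_pos hipos hdet]
  exact ⟨htr, hJtr, J.re_pos_of_mem_spectrum_map_ofReal hJtr hJdet⟩

/-- Under the source condition `u(1 − c i*) > b + l_i/i*` and positive
determinant condition `b α p_r − a l_i > 0`, the trace `a i* − l_i` of the
IBIN Jacobian is strictly positive, so both eigenvalues of `J(i*,r*)` have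
positive real part. -/
theorem ibin_source (β α u pr li istar rstar a b c : ℝ)
    (hα : 0 < α) (hpr : 0 < pr) (hli : 0 < li)
    (hipos : 0 < istar) (hrpos : 0 < rstar)
    (hr : rstar = (α * pr / li) * istar)
    (hc : c = 1 + α * pr / li)
    (hb : b = β + u * istar)
    (ha : a = u * (1 - istar - rstar) - b)
    (hbpos : 0 < b)
    (hdet : 0 < b * α * pr - a * li)
    (hsrc : b + li / istar < u * (1 - c * istar))
    (J : Matrix (Fin 2) (Fin 2) ℝ)
    (hJ : J = !![istar * a, -istar * b; α * pr, -li]) :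
    0 < istar * a - li ∧ 0 < Matrix.trace J ∧
    ∀ μ ∈ spectrum ℂ (J.map (Complex.ofReal)), 0 < μ.re :=
  ibin_source_general α u pr li istar rstar a b c hipos hr hc ha hdet hsrc J hJ
end
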